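/- arXiv:1806.03263 — 2 statements merged into one kernel-verified Lean document; each statement's English description precedes it below -/
import Mathlib

section
/- Alternating local complementation on two adjacent vertices has period dividing 6: if i and j are adjacent in a simple graph G, then applying the composition LC_i ∘ LC_j three times returns G, i.e. (LC_i ∘ LC_j)^3(G) = G. -/
/-- Local complementation at a vertex `α`: edges between distinct neighbours of `α` are toggled,
all other adjacencies unchanged. -/
def localComplement {V : Type*} (G : SimpleGraph V) (α : V) : SimpleGraph V where
  Adj u v := u ≠ v ∧ Xor' (G.Adj u v) (G.Adj α u ∧ G.Adj α v)
  symm := by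
    constructor
    rintro u v ⟨hne, hx⟩
    refine ⟨hne.symm, ?_⟩
    rw [G.adj_comm v u]
    unfold Xor' at *
    rwa [and_comm (a := G.Adj α v)]
  loopless := ⟨fun v h => h.1 rfl⟩

/-! Local complementation is an involution, and for an edge `ij` the pivot
`LC_i ∘ LC_j ∘ LC_i` is symmetric in `i` and `j`: it swaps the neighbourhoods of `i` and `j`
and toggles `uv` for the other vertices exactly when `u ~ i, v ~ j` or `u ~ j, v ~ i`, but not
both. Hence `(LC_i ∘ LC_j)^3 = (LC_i ∘ LC_j ∘ LC_i) ∘ (LC_j ∘ LC_i ∘ LC_j)` is the square of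
one pivot, i.e. the identity. -/

namespace SimpleGraph

variable {V : Type*} (G : SimpleGraph V) {i j u v : V}

lemma localComplement_adj :
    (localComplement G i).Adj u v ↔ u ≠ v ∧ Xor (G.Adj u v) (G.Adj i u ∧ G.Adj i v) := Iff.rfl

@[simp] lemma localComplement_adj_self : (localComplement G i).Adj i v ↔ G.Adj i v := by
  grind [localComplement_adj, Adj.ne, G.irrefl]

@[simp] lemma localComplement_localComplement : localComplement (localComplement G i) i = G := by
  ext u v
  rw [localComplement_adj, localComplement_adj_self, localComplement_adj_self, localComplement_adj]
  grind [Adj.ne]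

def pivot (i j : V) : SimpleGraph V :=
  localComplement (localComplement (localComplement G i) j) i

@[simp] lemma pivot_pivot : (G.pivot i j).pivot i j = G := by
  simp [pivot]

lemma pivot_adj_self : (G.pivot i j).Adj i j ↔ G.Adj i j := by
  grind [pivot, localComplement_adj, Adj.ne, adj_comm]

variable {G}

lemma pivot_adj_left (h : G.Adj i j) (hvi : v ≠ i) (hvj : v ≠ j) :
    (G.pivot i j).Adj i v ↔ G.Adj j v := by
  grind [pivot, localComplement_adj, Adj.ne, adj_comm]

lemma pivot_adj_right (h : G.Adj i j) (hvi : v ≠ i) (hvj : v ≠ j) :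
    (G.pivot i j).Adj j v ↔ G.Adj i v := by
  grind [pivot, localComplement_adj, Adj.ne, adj_comm]

lemma pivot_adj_of_ne (h : G.Adj i j) (hui : u ≠ i) (huj : u ≠ j) (hvi : v ≠ i) (hvj : v ≠ j) :
    (G.pivot i j).Adj u v ↔
      Xor (G.Adj u v) (Xor (G.Adj i u ∧ G.Adj j v) (G.Adj j u ∧ G.Adj i v)) := by
  grind [pivot, localComplement_adj, Adj.ne, adj_comm]

lemma pivot_adj_left_iff_swap (h : G.Adj i j) :
    (G.pivot i j).Adj i v ↔ (G.pivot j i).Adj i v := by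
  obtain rfl | hvi := eq_or_ne v i
  · simp
  obtain rfl | hvj := eq_or_ne v j
  · rw [pivot_adj_self, adj_comm (G.pivot _ _), pivot_adj_self, adj_comm]
  rw [pivot_adj_left h hvi hvj, pivot_adj_right h.symm hvj hvi]

lemma pivot_comm (h : G.Adj i j) : G.pivot i j = G.pivot j i := by
  have at_i := fun v ↦ pivot_adj_left_iff_swap (v := v) h
  have at_j := fun v ↦ (pivot_adj_left_iff_swap (v := v) h.symm).symm
  ext u v
  obtain rfl | hui := eq_or_ne u i
  · exact at_i v
  obtain rfl | huj := eq_or_ne u j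
  · exact at_j v
  rw [adj_comm _ u v, adj_comm _ u v]
  obtain rfl | hvi := eq_or_ne v i
  · exact at_i u
  obtain rfl | hvj := eq_or_ne v j
  · exact at_j u
  rw [pivot_adj_of_ne h hvi hvj hui huj, pivot_adj_of_ne h.symm hvj hvi huj hui, xor_comm (_ ∧ _)]

end SimpleGraph

open SimpleGraph in
/-- Alternating local complementation on two adjacent vertices has period dividing 6:
applying `LC_i ∘ LC_j` three times returns the original graph. -/
theorem localComplement_alternating_period_six {V : Type*} (G : SimpleGraph V) (i j : V)
    (h : G.Adj i j) :
    (fun H => localComplement (localComplement H j) i)^[3] G = G := by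
  change (G.pivot j i).pivot i j = G
  rw [← pivot_comm h, pivot_pivot]
end

section
/- For m ≥ 2, there exists a function f : ZMod m → {0, 2} with Σ_i f(i) = m such that every i with f(i) = 0 has both neighbors i−1 and i+1 satisfying f = 2, if and only if m is even. -/
/-!
Every source emits an even number of pairs, so the total `m` is even. Conversely, for even `m`
the parity of an index is well defined on `ZMod m`; let the sources of even index fire twice and
the others not at all. Neighbours have opposite parity, so each silent source sits between two
firing ones, and every pair of neighbours contributes exactly `2`, so the total is `m`.
-/

section ShiftPairing

variable {G : Type*} [AddGroup G] [Fintype G]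

theorem two_mul_sum_eq_card_mul_of_add_shift (f : G → ℕ) (g : G) (c : ℕ)
    (hf : ∀ x, f x + f (x + g) = c) : 2 * ∑ x, f x = Fintype.card G * c := by
  have hshift : ∑ x, f (x + g) = ∑ x, f x := Equiv.sum_comp (Equiv.addRight g) f
  calc 2 * ∑ x, f x = ∑ x, f x + ∑ x, f (x + g) := by rw [hshift, two_mul]
    _ = ∑ x, (f x + f (x + g)) := Finset.sum_add_distrib.symm
    _ = Fintype.card G * c := by simp only [hf, Finset.sum_const, Finset.card_univ, smul_eq_mul]

end ShiftPairing

section Alternating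

variable {G : Type*} [AddGroup G]

def alternatingConfig (φ : G →+ ZMod 2) (x : G) : ℕ := if φ x = 0 then 2 else 0

variable (φ : G →+ ZMod 2) {g : G}

theorem alternatingConfig_eq_zero_or_eq_two (x : G) :
    alternatingConfig φ x = 0 ∨ alternatingConfig φ x = 2 := by
  unfold alternatingConfig
  split_ifs <;> simp

theorem alternatingConfig_add_neighbour (hg : φ g = 1) (x : G) :
    alternatingConfig φ x + alternatingConfig φ (x + g) = 2 := by
  unfold alternatingConfig
  rw [map_add, hg]
  generalize φ x = a
  revert a
  decide

theorem alternatingConfig_neighbours_eq_two (hg : φ g = 1) {x : G}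
    (hx : alternatingConfig φ x = 0) :
    alternatingConfig φ (x - g) = 2 ∧ alternatingConfig φ (x + g) = 2 := by
  unfold alternatingConfig at *
  rw [map_sub, map_add, hg]
  generalize φ x = a at hx ⊢
  revert a
  decide

end Alternating

theorem ring_masking_iff_even_general (m : ℕ) [NeZero m] :
    (∃ f : ZMod m → ℕ, (∀ i, f i = 0 ∨ f i = 2) ∧ (∑ i, f i = m) ∧
      ∀ i, f i = 0 → f (i - 1) = 2 ∧ f (i + 1) = 2) ↔ Even m := by
  constructor
  · rintro ⟨f, h02, hsum, -⟩
    rw [← hsum]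
    exact Finset.even_sum _ fun i _ => by rcases h02 i with h | h <;> simp [h]
  · intro hm
    let parity := ZMod.castHom (even_iff_two_dvd.mp hm) (ZMod 2)
    let φ : ZMod m →+ ZMod 2 := parity.toAddMonoidHom
    have hφ : φ 1 = 1 := map_one parity
    refine ⟨alternatingConfig φ, alternatingConfig_eq_zero_or_eq_two φ, ?_,
      fun i => alternatingConfig_neighbours_eq_two φ hφ⟩
    have hsum :=
      two_mul_sum_eq_card_mul_of_add_shift _ 1 2 (alternatingConfig_add_neighbour φ hφ)
    rw [ZMod.card] at hsum
    omega

/-- In a ring of `m ≥ 2` entangled-pair sources, a masking configuration — each source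
emits 0 or 2 pairs, `m` pairs in total, and every non-firing source has both cyclic
neighbours firing twice — exists if and only if `m` is even. -/
theorem ring_masking_iff_even (m : ℕ) [NeZero m] (hm : 2 ≤ m) :
    (∃ f : ZMod m → ℕ, (∀ i, f i = 0 ∨ f i = 2) ∧ (∑ i, f i = m) ∧
      ∀ i, f i = 0 → f (i - 1) = 2 ∧ f (i + 1) = 2) ↔ Even m :=
  ring_masking_iff_even_general m
end
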